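/- Let M ∈ GL₂(ℝ) be any invertible real 2×2 matrix. Define the geodesic curve g(u) := M·diag(eᵘ, e⁻ᵘ)·Mᵀ and the horocycle curve ĝ(u) := M·[[1, u],[u, 1+u²]]·Mᵀ of positive definite 2×2 matrices. Then for every u ∈ ℝ, tr( (1/4)·(g(u)⁻¹·g'(u))² − (1/2)·g(u)⁻¹·g''(u) ) = −1/2, and likewise tr( (1/4)·(ĝ(u)⁻¹·ĝ'(u))² − (1/2)·ĝ(u)⁻¹·ĝ''(u) ) = −1/2. -/

import Mathlib

open Matrix

attribute [local instance] Matrix.frobeniusNormedAddCommGroup Matrix.frobeniusNormedSpace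

/-- The geodesic curve `g(u) = M diag(eᵘ, e⁻ᵘ) Mᵀ` in positive definite `2×2` matrices. -/
noncomputable def geodesicCurve (M : Matrix (Fin 2) (Fin 2) ℝ) :
    ℝ → Matrix (Fin 2) (Fin 2) ℝ :=
  fun u => M * Matrix.diagonal ![Real.exp u, Real.exp (-u)] * Mᵀ

/-- The horocycle curve `ĝ(u) = M [[1,u],[u,1+u²]] Mᵀ` in positive definite `2×2` matrices. -/
noncomputable def horocycleCurve (M : Matrix (Fin 2) (Fin 2) ℝ) :
    ℝ → Matrix (Fin 2) (Fin 2) ℝ :=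
  fun u => M * !![1, u; u, 1 + u ^ 2] * Mᵀ

/-!
For `g = M D Mᵀ` with `M` invertible, `g⁻¹g' = M⁻ᵀ (D⁻¹D') Mᵀ` and `g⁻¹g'' = M⁻ᵀ (D⁻¹D'') Mᵀ`,
so the Ricci coefficient, the trace of a polynomial in these two matrices, is invariant under the
congruence action of `GL₂(ℝ)`. It remains to evaluate it at `D = diag(eᵘ, e⁻ᵘ)`, where
`D⁻¹D' = diag(1, -1)` and `D⁻¹D'' = 1`, and at `D = [[1,u],[u,1+u²]]`, where `(D⁻¹D')²` and
`D⁻¹D''` both have trace `2`; in both cases the value is `2/4 - 2/2 = -1/2`.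
-/

theorem Matrix.hasDerivAt_matrix {m n : Type*} [Fintype m] [Fintype n]
    {f : ℝ → Matrix m n ℝ} {f' : Matrix m n ℝ} {x : ℝ} :
    HasDerivAt f f' x ↔ ∀ i j, HasDerivAt (fun t => f t i j) (f' i j) x :=
  hasDerivAt_pi.trans (forall_congr' fun _ => hasDerivAt_pi)

section Congruence

variable {n : Type*} [Fintype n] [DecidableEq n]

theorem HasDerivAt.mul_mul_transpose {g : ℝ → Matrix n n ℝ} {g' : Matrix n n ℝ} {u : ℝ}
    (hg : HasDerivAt g g' u) (M : Matrix n n ℝ) :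
    HasDerivAt (fun t => M * g t * Mᵀ) (M * g' * Mᵀ) u :=
  (LinearMap.mulRight ℝ Mᵀ ∘ₗ LinearMap.mulLeft ℝ M).toContinuousLinearMap.hasFDerivAt
    |>.comp_hasDerivAt u hg

theorem Matrix.inv_mul_mul_transpose_mul {M : Matrix n n ℝ} (hM : IsUnit M)
    (A B : Matrix n n ℝ) :
    (M * A * Mᵀ)⁻¹ * (M * B * Mᵀ) = Mᵀ⁻¹ * (A⁻¹ * B) * Mᵀ := by
  have hM' : IsUnit M.det := (isUnit_iff_isUnit_det M).1 hM
  simp only [mul_inv_rev, Matrix.mul_assoc, nonsing_inv_mul_cancel_left _ _ hM']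

/-- `ricciCoeff (g u) (g' u) (g'' u)` is the coefficient of `du ⊗ du` in the Ricci tensor of the
Rosen plane wave `2 du dv − dxᵀ g(u) dx`. -/
noncomputable def ricciCoeff (g g' g'' : Matrix n n ℝ) : ℝ :=
  ((1/4 : ℝ) • (g⁻¹ * g') ^ 2 - (1/2 : ℝ) • (g⁻¹ * g'')).trace

theorem ricciCoeff_mul_mul_transpose {M : Matrix n n ℝ} (hM : IsUnit M) (A B C : Matrix n n ℝ) :
    ricciCoeff (M * A * Mᵀ) (M * B * Mᵀ) (M * C * Mᵀ) = ricciCoeff A B C := by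
  have hMt : IsUnit Mᵀ.det := by rwa [det_transpose, ← isUnit_iff_isUnit_det]
  have hsq (X : Matrix n n ℝ) : (Mᵀ⁻¹ * X * Mᵀ) ^ 2 = Mᵀ⁻¹ * X ^ 2 * Mᵀ := by
    simp only [pow_two, Matrix.mul_assoc, mul_nonsing_inv_cancel_left _ _ hMt]
  rw [ricciCoeff, ricciCoeff, inv_mul_mul_transpose_mul hM, inv_mul_mul_transpose_mul hM, hsq,
    ← Matrix.smul_mul, ← Matrix.mul_smul, ← Matrix.smul_mul, ← Matrix.mul_smul, ← Matrix.sub_mul,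
    ← Matrix.mul_sub, trace_conj' ((isUnit_iff_isUnit_det _).2 hMt)]

end Congruence

theorem ricciCoeff_diagonal_fin_two {a b : ℝ} (ha : a ≠ 0) (hb : b ≠ 0) :
    ricciCoeff (diagonal ![a, b]) (diagonal ![a, -b]) (diagonal ![a, b]) = -(1/2) := by
  have hinv : (diagonal ![a, b])⁻¹ = diagonal ![a⁻¹, b⁻¹] := by
    refine inv_eq_left_inv ?_
    rw [diagonal_mul_diagonal, ← diagonal_one]
    congr 1
    ext i
    fin_cases i <;> simp [ha, hb]
  rw [ricciCoeff, hinv]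
  simp [diagonal_mul_diagonal, diagonal_pow, ha, hb]
  norm_num

theorem inv_horocycle (u : ℝ) :
    (!![1, u; u, 1 + u ^ 2] : Matrix (Fin 2) (Fin 2) ℝ)⁻¹ = !![1 + u ^ 2, -u; -u, 1] := by
  refine inv_eq_left_inv ?_
  ext i j
  fin_cases i <;> fin_cases j <;> simp [mul_apply] <;> ring

theorem ricciCoeff_horocycle (u : ℝ) :
    ricciCoeff !![1, u; u, 1 + u ^ 2] !![0, 1; 1, 2 * u] !![0, 0; 0, 2] = -(1/2) := by
  rw [ricciCoeff, inv_horocycle]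
  simp [trace_fin_two, pow_two]
  ring

open Real

theorem hasDerivAt_diagonal_exp (u : ℝ) :
    HasDerivAt (fun t => diagonal ![exp t, exp (-t)]) (diagonal ![exp u, -exp (-u)]) u := by
  rw [hasDerivAt_matrix]
  intro i j
  fin_cases i <;> fin_cases j <;> simp only [Fin.zero_eta, Fin.mk_one, diagonal_apply_eq,
    diagonal_apply_ne _ zero_ne_one, diagonal_apply_ne _ one_ne_zero]
  exacts [hasDerivAt_exp u, hasDerivAt_const u 0, hasDerivAt_const u 0,
    by simpa using (hasDerivAt_neg u).exp]

theorem hasDerivAt_diagonal_exp_neg_exp (u : ℝ) :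
    HasDerivAt (fun t => diagonal ![exp t, -exp (-t)]) (diagonal ![exp u, exp (-u)]) u := by
  rw [hasDerivAt_matrix]
  intro i j
  fin_cases i <;> fin_cases j <;> simp only [Fin.zero_eta, Fin.mk_one, diagonal_apply_eq,
    diagonal_apply_ne _ zero_ne_one, diagonal_apply_ne _ one_ne_zero]
  exacts [hasDerivAt_exp u, hasDerivAt_const u 0, hasDerivAt_const u 0,
    by simpa [Pi.neg_def] using (hasDerivAt_neg u).exp.neg]

theorem hasDerivAt_horocycle (u : ℝ) :
    HasDerivAt (fun t : ℝ => !![1, t; t, 1 + t ^ 2]) !![0, 1; 1, 2 * u] u := by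
  rw [hasDerivAt_matrix]
  intro i j
  fin_cases i <;> fin_cases j <;> simp
  exacts [hasDerivAt_const u 1, hasDerivAt_id' u, hasDerivAt_id' u,
    by simpa using hasDerivAt_pow 2 u]

theorem hasDerivAt_horocycle_velocity (u : ℝ) :
    HasDerivAt (fun t : ℝ => !![0, 1; 1, 2 * t]) !![0, 0; 0, 2] u := by
  rw [hasDerivAt_matrix]
  intro i j
  fin_cases i <;> fin_cases j <;> simp
  exacts [hasDerivAt_const u 0, hasDerivAt_const u 1, hasDerivAt_const u 1,
    by simpa using (hasDerivAt_id' u).const_mul 2]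

theorem deriv_geodesicCurve (M : Matrix (Fin 2) (Fin 2) ℝ) :
    deriv (geodesicCurve M) = fun u => M * diagonal ![exp u, -exp (-u)] * Mᵀ :=
  funext fun u => ((hasDerivAt_diagonal_exp u).mul_mul_transpose M).deriv

theorem deriv_deriv_geodesicCurve (M : Matrix (Fin 2) (Fin 2) ℝ) :
    deriv (deriv (geodesicCurve M)) = geodesicCurve M := by
  rw [deriv_geodesicCurve]
  exact funext fun u => ((hasDerivAt_diagonal_exp_neg_exp u).mul_mul_transpose M).deriv

theorem deriv_horocycleCurve (M : Matrix (Fin 2) (Fin 2) ℝ) :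
    deriv (horocycleCurve M) = fun u => M * !![0, 1; 1, 2 * u] * Mᵀ :=
  funext fun u => ((hasDerivAt_horocycle u).mul_mul_transpose M).deriv

theorem deriv_deriv_horocycleCurve (M : Matrix (Fin 2) (Fin 2) ℝ) :
    deriv (deriv (horocycleCurve M)) = fun _ => M * !![0, 0; 0, 2] * Mᵀ := by
  rw [deriv_horocycleCurve]
  exact funext fun u => ((hasDerivAt_horocycle_velocity u).mul_mul_transpose M).deriv

theorem ricci_of_geodesic_and_horocycle (M : Matrix (Fin 2) (Fin 2) ℝ)
    (hM : IsUnit M) (u : ℝ) :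
    ((1/4 : ℝ) • ((geodesicCurve M u)⁻¹ * deriv (geodesicCurve M) u) ^ 2 -
     (1/2 : ℝ) • ((geodesicCurve M u)⁻¹ * deriv (deriv (geodesicCurve M)) u)).trace
      = -(1/2) ∧
    ((1/4 : ℝ) • ((horocycleCurve M u)⁻¹ * deriv (horocycleCurve M) u) ^ 2 -
     (1/2 : ℝ) • ((horocycleCurve M u)⁻¹ * deriv (deriv (horocycleCurve M)) u)).trace
      = -(1/2) := by
  change ricciCoeff _ _ _ = _ ∧ ricciCoeff _ _ _ = _
  rw [deriv_deriv_geodesicCurve, deriv_geodesicCurve, deriv_deriv_horocycleCurve,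
    deriv_horocycleCurve]
  exact ⟨(ricciCoeff_mul_mul_transpose hM _ _ _).trans
      (ricciCoeff_diagonal_fin_two (exp_ne_zero u) (exp_ne_zero (-u))),
    (ricciCoeff_mul_mul_transpose hM _ _ _).trans (ricciCoeff_horocycle u)⟩
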